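/- arXiv:1112.0852 — 3 statements merged into one kernel-verified Lean document; each statement's English description precedes it below -/
import Mathlib

section
/- Let A be an artin algebra and X an indecomposable non-projective A-module with pd_A X ≥ 2. Then Hom_A(D(A), τ_A X) ≠ 0, where τ_A is the Auslander-Reiten translate and D(A) the minimal injective cogenerator. -/
universe u

variable {A : Type u} [Ring A]

/-- The category of (right) `A`-modules, modeled as modules over `Aᵐᵒᵖ`. -/
abbrev Modc (A : Type u) [Ring A] := ModuleCat.{u} Aᵐᵒᵖ

/-- A module is finitely generated. -/
def FinGen (M : Modc A) : Prop := Module.Finite Aᵐᵒᵖ M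

/-- A module is indecomposable: nonzero, and its endomorphism ring has no
nontrivial idempotents. -/
def Indec (M : Modc A) : Prop :=
  Nontrivial M ∧ ∀ e : M →ₗ[Aᵐᵒᵖ] M, e ∘ₗ e = e → e = 0 ∨ e = LinearMap.id

def IsSplitMono {M N : Modc A} (f : M →ₗ[Aᵐᵒᵖ] N) : Prop :=
  ∃ g : N →ₗ[Aᵐᵒᵖ] M, g ∘ₗ f = LinearMap.id

def IsSplitEpi {M N : Modc A} (f : M →ₗ[Aᵐᵒᵖ] N) : Prop :=
  ∃ g : N →ₗ[Aᵐᵒᵖ] M, f ∘ₗ g = LinearMap.id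

/-- An irreducible morphism between modules. -/
def IsIrred {M N : Modc A} (f : M →ₗ[Aᵐᵒᵖ] N) : Prop :=
  ¬ IsSplitMono f ∧ ¬ IsSplitEpi f ∧
  ∀ (L : Modc A) (g : M →ₗ[Aᵐᵒᵖ] L) (h : L →ₗ[Aᵐᵒᵖ] N),
    h ∘ₗ g = f → IsSplitEpi h ∨ IsSplitMono g

/-- Neighbors in the Auslander-Reiten quiver: both finitely generated
indecomposable, and isomorphic or linked by an irreducible map. -/
def Neighbor (X Y : Modc A) : Prop :=
  FinGen X ∧ FinGen Y ∧ Indec X ∧ Indec Y ∧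
  (Nonempty (X ≃ₗ[Aᵐᵒᵖ] Y) ∨ (∃ f : X →ₗ[Aᵐᵒᵖ] Y, IsIrred f) ∨
    (∃ f : Y →ₗ[Aᵐᵒᵖ] X, IsIrred f))

/-- A component of the Auslander-Reiten quiver `Γ_A`, viewed as the class of
indecomposable finitely generated modules lying in it. -/
def IsARComponent (C : Set (Modc A)) : Prop :=
  C.Nonempty ∧ (∀ X ∈ C, FinGen X ∧ Indec X) ∧
  (∀ X ∈ C, ∀ Y : Modc A, Neighbor X Y → Y ∈ C) ∧
  (∀ X ∈ C, ∀ Y ∈ C, Relation.ReflTransGen Neighbor X Y)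

/-- The annihilator of a class of modules. -/
def annSet (C : Set (Modc A)) : Set A :=
  {a | ∀ X ∈ C, ∀ x : X, MulOpposite.op a • x = 0}

/-- The annihilator of a single module. -/
def annM (M : Modc A) : Set A := {a | ∀ x : M, MulOpposite.op a • x = 0}

/-- Membership in `add C`: isomorphic to a finite direct sum of modules in `C`. -/
def InAdd (C : Set (Modc A)) (M : Modc A) : Prop :=
  ∃ (k : ℕ) (F : Fin k → Modc A), (∀ i, F i ∈ C) ∧
    Nonempty (M ≃ₗ[Aᵐᵒᵖ] ((i : Fin k) → F i))

/-- An external short path of `C`: nonzero non-isomorphisms `X → Y → Z` between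
indecomposables with `X, Z ∈ C` and `Y ∉ C`. -/
def HasExtShortPath (C : Set (Modc A)) : Prop :=
  ∃ X Y Z : Modc A, X ∈ C ∧ Z ∈ C ∧ Y ∉ C ∧ FinGen Y ∧ Indec Y ∧
    (∃ f : X →ₗ[Aᵐᵒᵖ] Y, f ≠ 0 ∧ ¬ Function.Bijective f) ∧
    (∃ g : Y →ₗ[Aᵐᵒᵖ] Z, g ≠ 0 ∧ ¬ Function.Bijective g)

/-- Projective dimension at most one. -/
def PdLE1 (X : Modc A) : Prop :=
  ∃ (P₁ P₀ : Modc A) (f : P₁ →ₗ[Aᵐᵒᵖ] P₀) (g : P₀ →ₗ[Aᵐᵒᵖ] X),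
    Module.Projective Aᵐᵒᵖ P₁ ∧ Module.Projective Aᵐᵒᵖ P₀ ∧
    Function.Injective f ∧ Function.Surjective g ∧
    LinearMap.range f = LinearMap.ker g

/-- Projective dimension at most two. -/
def PdLE2 (X : Modc A) : Prop :=
  ∃ (P₂ P₁ P₀ : Modc A) (f : P₂ →ₗ[Aᵐᵒᵖ] P₁) (g : P₁ →ₗ[Aᵐᵒᵖ] P₀)
    (h : P₀ →ₗ[Aᵐᵒᵖ] X),
    Module.Projective Aᵐᵒᵖ P₂ ∧ Module.Projective Aᵐᵒᵖ P₁ ∧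
    Module.Projective Aᵐᵒᵖ P₀ ∧
    Function.Injective f ∧ Function.Surjective h ∧
    LinearMap.range f = LinearMap.ker g ∧ LinearMap.range g = LinearMap.ker h

/-- Injective dimension at most one. -/
def IdLE1 (X : Modc A) : Prop :=
  ∃ (I₀ I₁ : Modc A) (f : X →ₗ[Aᵐᵒᵖ] I₀) (g : I₀ →ₗ[Aᵐᵒᵖ] I₁),
    Module.Injective Aᵐᵒᵖ I₀ ∧ Module.Injective Aᵐᵒᵖ I₁ ∧
    Function.Injective f ∧ Function.Surjective g ∧
    LinearMap.range f = LinearMap.ker g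

/-- An almost split (Auslander-Reiten) sequence `0 → T → E → X → 0`; then
`T = τ_A X` and `X = τ_A⁻ T`. -/
def IsAlmostSplitSeq (T E X : Modc A) (f : T →ₗ[Aᵐᵒᵖ] E) (g : E →ₗ[Aᵐᵒᵖ] X) : Prop :=
  Function.Injective f ∧ Function.Surjective g ∧
  LinearMap.range f = LinearMap.ker g ∧
  Indec T ∧ Indec X ∧ ¬ IsSplitEpi g ∧
  (∀ (V : Modc A) (h : V →ₗ[Aᵐᵒᵖ] X), ¬ IsSplitEpi h → ∃ k : V →ₗ[Aᵐᵒᵖ] E, g ∘ₗ k = h) ∧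
  (∀ (V : Modc A) (h : T →ₗ[Aᵐᵒᵖ] V), ¬ IsSplitMono h → ∃ k : E →ₗ[Aᵐᵒᵖ] V, k ∘ₗ f = h)

/-- A generator of the radical of `mod A`: a map factoring through a
non-isomorphism between finitely generated indecomposables. -/
def IsNonIsoGen {X Y : Modc A} (f : X →ₗ[Aᵐᵒᵖ] Y) : Prop :=
  ∃ (M N : Modc A) (u : M →ₗ[Aᵐᵒᵖ] N) (g : X →ₗ[Aᵐᵒᵖ] M) (h : N →ₗ[Aᵐᵒᵖ] Y),
    FinGen M ∧ Indec M ∧ FinGen N ∧ Indec N ∧ ¬ Function.Bijective u ∧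
    f = h ∘ₗ (u ∘ₗ g)

/-- The radical `rad_A(X, Y)`: the ideal of `mod A` generated by all
non-isomorphisms between indecomposables. -/
def rad1 (X Y : Modc A) : AddSubgroup (X →ₗ[Aᵐᵒᵖ] Y) :=
  AddSubgroup.closure {f | IsNonIsoGen f}

/-- Powers of the radical: `radPow n = rad_A^(n+1)`. -/
def radPow : ℕ → (X Y : Modc A) → AddSubgroup (X →ₗ[Aᵐᵒᵖ] Y)
  | 0 => rad1
  | n + 1 => fun X Y => AddSubgroup.closure
      {f | ∃ (Z : Modc A) (g : X →ₗ[Aᵐᵒᵖ] Z) (h : Z →ₗ[Aᵐᵒᵖ] Y),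
        FinGen Z ∧ g ∈ radPow n X Z ∧ h ∈ rad1 Z Y ∧ f = h ∘ₗ g}

/-- The infinite radical `rad_A^∞(X, Y) = ⋂_{i ≥ 1} rad_A^i(X, Y)`. -/
def radInf (X Y : Modc A) : AddSubgroup (X →ₗ[Aᵐᵒᵖ] Y) := ⨅ n : ℕ, radPow n X Y

/-- `X` is (isomorphic to) a direct summand of `M`. -/
def IsDirectSummandOf (X M : Modc A) : Prop :=
  ∃ (ι : X →ₗ[Aᵐᵒᵖ] M) (ρ : M →ₗ[Aᵐᵒᵖ] X), ρ ∘ₗ ι = LinearMap.id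



/-- A finitely generated injective cogenerator, playing the role of the minimal
injective cogenerator `D(A)` of `mod A`. -/
def IsInjCogen {A : Type u} [Ring A] (DA : Modc A) : Prop :=
  FinGen DA ∧ Module.Injective Aᵐᵒᵖ DA ∧
  ∀ X : Modc A, FinGen X →
    ∃ (t : ℕ) (f : X →ₗ[Aᵐᵒᵖ] (Fin t → DA)), Function.Injective f

/-!
Suppose every map `D(A) → τ_A X` vanishes. Then every extension `0 → C → V → X → 0` with `C` a
quotient of some `D(A)ᵗ` splits: otherwise `V → X` factors through the right almost split map
`E → X`, the induced map `C → τ_A X` is zero, and so `V → X` would give a section of `E → X`.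
Equivalently, for a free cover `0 → Ω → F → X → 0`, every map `Ω → C` extends over `F`.
Now cover `Ω` by a free module `G` with kernel `Ω₂`, embed `Ω₂ ↪ D(A)ᵗ` and let `C` be the
cokernel. Extending `Ω₂ ↪ D(A)ᵗ` over `G`, the induced map `Ω → C` extends over `F` and then
lifts to `D(A)ᵗ`; correcting by it gives a retraction `G → Ω₂`. So `Ω` is a direct summand of
`G`, hence projective, and `pd X ≤ 1`.
-/

open LinearMap Function

section

variable {R : Type*} [Ring R] {M N P : Type*} [AddCommGroup M] [AddCommGroup N] [AddCommGroup P]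
  [Module R M] [Module R N] [Module R P]

theorem LinearMap.exists_comp_eq_of_surjective {q : M →ₗ[R] N} (hq : Surjective q)
    {k : M →ₗ[R] P} (hk : ker q ≤ ker k) : ∃ w : N →ₗ[R] P, w ∘ₗ q = k :=
  ⟨(ker q).liftQ k hk ∘ₗ (q.quotKerEquivOfSurjective hq).symm.toLinearMap, by
    ext x
    simp⟩

theorem LinearMap.exists_comp_eq_of_injective {f : M →ₗ[R] N} (hf : Injective f)
    {l : P →ₗ[R] N} (hl : range l ≤ range f) : ∃ t : P →ₗ[R] M, f ∘ₗ t = l :=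
  ⟨(LinearEquiv.ofInjective f hf).symm.toLinearMap ∘ₗ
    l.codRestrict (range f) (fun c => hl ⟨c, rfl⟩), by ext; simp⟩

theorem LinearMap.pi_eq_zero_of_forall_eq_zero {ι : Type*} [Finite ι] [DecidableEq ι]
    (h : ∀ φ : M →ₗ[R] N, φ = 0) (w : (ι → M) →ₗ[R] N) : w = 0 :=
  pi_ext' fun i => by simpa using h (w ∘ₗ single R (fun _ => M) i)

end

theorem isNoetherianRing_mulOpposite (K A : Type*) [CommRing K] [IsNoetherianRing K] [Ring A]
    [Algebra K A] [Module.Finite K A] : IsNoetherianRing Aᵐᵒᵖ := by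
  have : Module.Finite K Aᵐᵒᵖ := Module.Finite.equiv (MulOpposite.opLinearEquiv K)
  exact isNoetherian_of_tower K inferInstance

section

variable {R : Type u} [Ring R]

theorem exists_extension_of_forall_splits {Ω F X C : Type u} [AddCommGroup Ω] [AddCommGroup F]
    [AddCommGroup X] [AddCommGroup C] [Module R Ω] [Module R F] [Module R X] [Module R C]
    {i : Ω →ₗ[R] F} {p : F →ₗ[R] X} (hi : Injective i) (hp : Surjective p) (hip : Exact i p)
    (hsplit : ∀ (V : Type u) [AddCommGroup V] [Module R V] (j : C →ₗ[R] V) (q : V →ₗ[R] X),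
      Injective j → Surjective q → Exact j q → ∃ s : X →ₗ[R] V, q ∘ₗ s = .id)
    (φ : Ω →ₗ[R] C) : ∃ ψ : F →ₗ[R] C, ψ ∘ₗ i = φ := by
  -- `(C × F) ⧸ N` is the pushout of `C ← Ω → F`.
  set N := range (φ.prod (-i))
  have hN : N ≤ ker (coprod 0 p) := by
    rintro _ ⟨ω, rfl⟩
    simp [hip.apply_apply_eq_zero]
  set j : C →ₗ[R] (C × F) ⧸ N := N.mkQ ∘ₗ inl R C F
  set q : (C × F) ⧸ N →ₗ[R] X := N.liftQ (coprod 0 p) hN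
  have hmk : ∀ ω, N.mkQ (0, i ω) = j (φ ω) := fun ω => by
    show N.mkQ (0, i ω) = N.mkQ (φ ω, 0)
    exact (Submodule.Quotient.eq N).mpr ⟨-ω, by simp⟩
  have hj : Injective j := by
    refine (injective_iff_map_eq_zero j).mpr fun c hc => ?_
    obtain ⟨ω, hω⟩ := (Submodule.Quotient.mk_eq_zero N).mp hc
    have hω0 : ω = 0 := hi (by simpa using congr_arg Prod.snd hω)
    simpa [hω0] using (congr_arg Prod.fst hω).symm
  have hq : Surjective q := fun x =>
    let ⟨w, hw⟩ := hp x
    ⟨N.mkQ (0, w), by simpa [q] using hw⟩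
  have hjq : Exact j q := by
    intro v
    obtain ⟨⟨c, w⟩, rfl⟩ := N.mkQ_surjective v
    refine ⟨fun hv => ?_, ?_⟩
    · obtain ⟨ω, rfl⟩ := (hip w).mp (by simpa [q] using hv)
      refine ⟨c + φ ω, ?_⟩
      rw [map_add, ← hmk, show j c = N.mkQ (c, 0) from rfl, ← map_add]
      simp
    · rintro ⟨c', hc'⟩
      rw [← hc']
      simp [j, q]
  obtain ⟨r, hr⟩ : ∃ r : (C × F) ⧸ N →ₗ[R] C, r ∘ₗ j = .id :=
    ((hjq.split_tfae hj hq).out 0 1).mp (hsplit _ j q hj hq hjq)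
  refine ⟨r ∘ₗ N.mkQ ∘ₗ inr R C F, LinearMap.ext fun ω => ?_⟩
  simpa [hmk] using LinearMap.congr_fun hr (φ ω)

def IsRightAlmostSplit {E X : Type u} [AddCommGroup E] [AddCommGroup X] [Module R E] [Module R X]
    (g : E →ₗ[R] X) : Prop :=
  (¬ ∃ s : X →ₗ[R] E, g ∘ₗ s = .id) ∧
  ∀ (V : Type u) [AddCommGroup V] [Module R V] (h : V →ₗ[R] X),
    (¬ ∃ s : X →ₗ[R] V, h ∘ₗ s = .id) → ∃ k : V →ₗ[R] E, g ∘ₗ k = h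

theorem IsRightAlmostSplit.exists_section_of_hom_eq_zero {T E X C V : Type u}
    [AddCommGroup T] [AddCommGroup E] [AddCommGroup X] [AddCommGroup C] [AddCommGroup V]
    [Module R T] [Module R E] [Module R X] [Module R C] [Module R V]
    {f : T →ₗ[R] E} {g : E →ₗ[R] X} (hg : IsRightAlmostSplit g) (hf : Injective f)
    (hfg : Exact f g) (hCT : ∀ φ : C →ₗ[R] T, φ = 0)
    {j : C →ₗ[R] V} {q : V →ₗ[R] X} (hq : Surjective q) (hjq : Exact j q) :
    ∃ s : X →ₗ[R] V, q ∘ₗ s = .id := by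
  by_contra hns
  obtain ⟨k, hk⟩ := hg.2 V q hns
  obtain ⟨t, ht⟩ := exists_comp_eq_of_injective hf (l := k ∘ₗ j) <| by
    rintro _ ⟨c, rfl⟩
    rw [← hfg.linearMap_ker_eq, LinearMap.mem_ker, LinearMap.comp_apply,
      ← LinearMap.comp_apply g, hk, hjq.apply_apply_eq_zero]
  have hkj : k ∘ₗ j = 0 := by rw [← ht, hCT t, comp_zero]
  obtain ⟨w, hw⟩ := exists_comp_eq_of_surjective hq (k := k) <| by
    rw [hjq.linearMap_ker_eq]
    rintro _ ⟨c, rfl⟩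
    exact LinearMap.congr_fun hkj c
  refine hg.1 ⟨w, (cancel_right hq).mp ?_⟩
  rw [LinearMap.comp_assoc, hw, hk, LinearMap.id_comp]

theorem exists_retraction_of_forall_lift {K G Ω I : Type u} [AddCommGroup K] [AddCommGroup G]
    [AddCommGroup Ω] [AddCommGroup I] [Module R K] [Module R G] [Module R Ω] [Module R I]
    [Module.Injective R I] {κ : K →ₗ[R] G} {π : G →ₗ[R] Ω} (hκ : Injective κ)
    (hπ : Surjective π) (hκπ : Exact κ π) {ε : K →ₗ[R] I} (hε : Injective ε)
    (hlift : ∀ φ : Ω →ₗ[R] I ⧸ range ε, ∃ β : Ω →ₗ[R] I, (range ε).mkQ ∘ₗ β = φ) :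
    ∃ ρ : G →ₗ[R] K, ρ ∘ₗ κ = .id := by
  obtain ⟨ψ, hψ⟩ := Module.Injective.extension_property R I K G κ hκ ε
  obtain ⟨φ, hφ⟩ := exists_comp_eq_of_surjective hπ (k := (range ε).mkQ ∘ₗ ψ) <| by
    rw [hκπ.linearMap_ker_eq]
    rintro _ ⟨x, rfl⟩
    simp [← LinearMap.comp_apply ψ, hψ]
  obtain ⟨β, hβ⟩ := hlift φ
  obtain ⟨ρ, hρ⟩ := exists_comp_eq_of_injective hε (l := ψ - β ∘ₗ π) <| by
    rintro _ ⟨x, rfl⟩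
    rw [← Submodule.ker_mkQ (range ε), LinearMap.mem_ker, ← LinearMap.comp_apply, comp_sub,
      ← hφ, ← LinearMap.comp_assoc, hβ, sub_self, LinearMap.zero_apply]
  refine ⟨ρ, (cancel_left hε).mp ?_⟩
  rw [← LinearMap.comp_assoc, hρ, sub_comp, LinearMap.comp_assoc, hκπ.linearMap_comp_eq_zero,
    comp_zero, sub_zero, hψ, LinearMap.comp_id]

theorem IsRightAlmostSplit.projective_ker_of_hom_eq_zero [IsNoetherianRing R]
    {T E X Q F : Type u} [AddCommGroup T] [AddCommGroup E] [AddCommGroup X] [AddCommGroup Q]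
    [AddCommGroup F] [Module R T] [Module R E] [Module R X] [Module R Q] [Module R F]
    [Module.Injective R Q] [Module.Projective R F] [Module.Finite R F]
    {f : T →ₗ[R] E} {g : E →ₗ[R] X} (hg : IsRightAlmostSplit g) (hf : Injective f)
    (hfg : Exact f g)
    (hQ : ∀ (M : Type u) [AddCommGroup M] [Module R M], Module.Finite R M →
      ∃ (t : ℕ) (e : M →ₗ[R] (Fin t → Q)), Injective e)
    (hQT : ∀ φ : Q →ₗ[R] T, φ = 0) {p : F →ₗ[R] X} (hp : Surjective p) :
    Module.Projective R (ker p) := by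
  have hext : ∀ (C : Type u) [AddCommGroup C] [Module R C], (∀ φ : C →ₗ[R] T, φ = 0) →
      ∀ φ : ker p →ₗ[R] C, ∃ ψ : F →ₗ[R] C, ψ ∘ₗ (ker p).subtype = φ :=
    fun C _ _ hCT => exists_extension_of_forall_splits (ker p).injective_subtype hp
      (exact_subtype_ker_map p) fun _ _ _ _ _ _ hq hjq =>
        hg.exists_section_of_hom_eq_zero hf hfg hCT hq hjq
  obtain ⟨m, π, hπ⟩ := Module.Finite.exists_fin' R (ker p)
  obtain ⟨t, ε, hε⟩ := hQ (ker π) inferInstance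
  have hCT : ∀ φ : ((Fin t → Q) ⧸ range ε) →ₗ[R] T, φ = 0 := fun φ =>
    Submodule.linearMap_qext _ (pi_eq_zero_of_forall_eq_zero hQT _)
  obtain ⟨ρ, hρ⟩ := exists_retraction_of_forall_lift (ker π).injective_subtype hπ
    (exact_subtype_ker_map π) hε fun φ => by
      obtain ⟨ψ, hψ⟩ := hext _ hCT φ
      obtain ⟨β, hβ⟩ := Module.projective_lifting_property _ ψ (range ε).mkQ_surjective
      exact ⟨β ∘ₗ (ker p).subtype, by rw [← LinearMap.comp_assoc, hβ, hψ]⟩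
  obtain ⟨s, hs⟩ : ∃ s, π ∘ₗ s = .id :=
    (((exact_subtype_ker_map π).split_tfae (ker π).injective_subtype hπ).out 1 0).mp
      (⟨ρ, hρ⟩ : ∃ ρ, ρ ∘ₗ (ker π).subtype = .id)
  exact Module.Projective.of_split s π hs

end

theorem hom_DA_tau_ne_zero_of_pd_ge_two_general
    (K : Type u) [CommRing K] [IsArtinianRing K]
    (A : Type u) [Ring A] [Algebra K A] [Module.Finite K A]
    (X T E : Modc A) (hX : FinGen X)
    (hpd : ¬ PdLE1 X)
    (f : T →ₗ[Aᵐᵒᵖ] E) (g : E →ₗ[Aᵐᵒᵖ] X)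
    (hars : IsAlmostSplitSeq T E X f g)
    (DA : Modc A) (hDA : IsInjCogen DA) :
    ∃ φ : DA →ₗ[Aᵐᵒᵖ] T, φ ≠ 0 := by
  by_contra! hzero
  obtain ⟨hf, -, hfg, -, -, hgns, hras, -⟩ := hars
  obtain ⟨-, hDAinj, hcog⟩ := hDA
  have hg : IsRightAlmostSplit g := ⟨hgns, fun V _ _ h hh => hras (.of _ V) h hh⟩
  have := isNoetherianRing_mulOpposite K A
  have : Module.Finite Aᵐᵒᵖ X := hX
  obtain ⟨n, p, hp⟩ := Module.Finite.exists_fin' Aᵐᵒᵖ X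
  have hker : Module.Projective Aᵐᵒᵖ (ker p) :=
    hg.projective_ker_of_hom_eq_zero hf (exact_iff.mpr hfg.symm)
      (fun M _ _ hM => hcog (.of _ M) hM) hzero hp
  exact hpd ⟨.of _ (ker p), .of _ (Fin n → Aᵐᵒᵖ), (ker p).subtype, p, hker, inferInstance,
    (ker p).injective_subtype, hp, (ker p).range_subtype⟩

/-- If `X` is indecomposable non-projective with `pd_A X ≥ 2`,
then `Hom_A(D(A), τ_A X) ≠ 0`, where `τ_A X` is given by the almost split
sequence `0 → T → E → X → 0`. -/
theorem hom_DA_tau_ne_zero_of_pd_ge_two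
    (K : Type u) [CommRing K] [IsArtinianRing K]
    (A : Type u) [Ring A] [Algebra K A] [Module.Finite K A]
    (X T E : Modc A) (hX : FinGen X) (hXi : Indec X)
    (hnp : ¬ Module.Projective Aᵐᵒᵖ X) (hpd : ¬ PdLE1 X)
    (f : T →ₗ[Aᵐᵒᵖ] E) (g : E →ₗ[Aᵐᵒᵖ] X)
    (hars : IsAlmostSplitSeq T E X f g)
    (DA : Modc A) (hDA : IsInjCogen DA) :
    ∃ φ : DA →ₗ[Aᵐᵒᵖ] T, φ ≠ 0 :=
  hom_DA_tau_ne_zero_of_pd_ge_two_general K A X T E hX hpd f g hars DA hDA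
end

section
/- Let A be an artin algebra and N an indecomposable non-injective A-module with id_A N ≥ 2. Then Hom_A(τ_A^{-} N, A) ≠ 0, where τ_A^{-} = TrD is the inverse Auslander-Reiten translation. -/
universe u

variable {A : Type u} [Ring A]

/-!
Suppose `Hom_A(N', A) = 0`, where `0 → N → F → N' → 0` is almost split, so `N' = τ⁻N`. Then
every extension `0 → N → E → Y → 0` with `Y ⊆ A` splits: otherwise `N → E` factors through
`N → F`, the induced map `N' → Y ⊆ A` vanishes, and so `N → F` would split. Thus
`Ext¹(J, N) = 0` for every right ideal `J`; pulling back along a map `J → I/N`, for `N ⊆ I`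
injective, shows that every such map lifts to `I`, so `I/N` is injective by Baer's criterion
and `id_A N ≤ 1`.
-/

universe v

/-- `Ext¹_R(Y, M) = 0`, in the form: every extension `0 → M → E → Y → 0` splits. -/
def ExtOneVanishes (R : Type*) [Ring R] (Y : Type u) [AddCommGroup Y] [Module R Y]
    (M : Type*) [AddCommGroup M] [Module R M] : Prop :=
  ∀ (E : Type u) [AddCommGroup E] [Module R E] (ι : M →ₗ[R] E) (π : E →ₗ[R] Y),
    Function.Injective ι → Function.Exact ι π → Function.Surjective π →
    ∃ s : Y →ₗ[R] E, π ∘ₗ s = LinearMap.id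

namespace Function.Exact

variable {R M N P W : Type*} [Ring R] [AddCommGroup M] [AddCommGroup N] [AddCommGroup P]
  [AddCommGroup W] [Module R M] [Module R N] [Module R P] [Module R W]
  {f : M →ₗ[R] N} {g : N →ₗ[R] P}

theorem exists_comp_eq_of_comp_eq_zero_of_surjective (h : Exact f g) (hg : Surjective g)
    (t : N →ₗ[R] W) (ht : t ∘ₗ f = 0) : ∃ c : P →ₗ[R] W, c ∘ₗ g = t := by
  refine ⟨(LinearMap.range f).liftQ t ?_ ∘ₗ
    (h.linearEquivOfSurjective hg).symm.toLinearMap, ?_⟩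
  · rintro _ ⟨x, rfl⟩
    exact LinearMap.congr_fun ht x
  · ext x
    simp

theorem exists_comp_eq_of_comp_eq_zero_of_injective (h : Exact f g) (hf : Injective f)
    (k : W →ₗ[R] N) (hk : g ∘ₗ k = 0) : ∃ t : W →ₗ[R] M, f ∘ₗ t = k :=
  ⟨(LinearEquiv.ofInjective f hf).symm.toLinearMap ∘ₗ
      k.codRestrict _ fun x => (h (k x)).mp (LinearMap.congr_fun hk x),
    LinearMap.ext fun _ => LinearEquiv.ofInjective_symm_apply f (h := hf) _⟩

end Function.Exact

section AlmostSplit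

variable {T F X : Modc A} {f : T →ₗ[Aᵐᵒᵖ] F} {g : F →ₗ[Aᵐᵒᵖ] X}

theorem IsAlmostSplitSeq.exact (hs : IsAlmostSplitSeq T F X f g) : Function.Exact f g :=
  LinearMap.exact_iff.mpr hs.2.2.1.symm

theorem IsAlmostSplitSeq.not_isSplitMono (hs : IsAlmostSplitSeq T F X f g) :
    ¬ IsSplitMono f := by
  have hfg := hs.exact
  obtain ⟨hf, hg, -, -, -, hg_split, -, -⟩ := hs
  exact fun hf_split => hg_split (((hfg.split_tfae hf hg).out 0 1).mpr hf_split)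

theorem IsAlmostSplitSeq.extOneVanishes_of_forall_eq_zero (hs : IsAlmostSplitSeq T F X f g)
    {Y : Type u} [AddCommGroup Y] [Module Aᵐᵒᵖ Y] (hY : ∀ φ : X →ₗ[Aᵐᵒᵖ] Y, φ = 0) :
    ExtOneVanishes Aᵐᵒᵖ Y T := by
  have hfg := hs.exact
  have hf_split := hs.not_isSplitMono
  obtain ⟨-, hg, -, -, -, -, -, hf_factor⟩ := hs
  intro E _ _ ι π hι hιπ hπ
  refine ((hιπ.split_tfae hι hπ).out 0 1).mpr ?_
  by_contra hι_split
  obtain ⟨k, hk⟩ := hf_factor (ModuleCat.of Aᵐᵒᵖ E) ι hι_split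
  obtain ⟨c, hc⟩ := hfg.exists_comp_eq_of_comp_eq_zero_of_surjective hg (π ∘ₗ k) (by
    rw [LinearMap.comp_assoc, hk, hιπ.linearMap_comp_eq_zero])
  have hπk : π ∘ₗ k = 0 := by rw [← hc, hY c, LinearMap.zero_comp]
  obtain ⟨t, ht⟩ := hιπ.exists_comp_eq_of_comp_eq_zero_of_injective hι k hπk
  refine hf_split ⟨t, LinearMap.ext fun x => hι ?_⟩
  simpa [← ht] using LinearMap.congr_fun hk x

end AlmostSplit

theorem Function.Exact.exists_comp_eq_of_extOneVanishes {R M Q : Type*} {Y I : Type u} [Ring R]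
    [AddCommGroup M] [AddCommGroup Q] [AddCommGroup Y] [AddCommGroup I]
    [Module R M] [Module R Q] [Module R Y] [Module R I]
    {ι : M →ₗ[R] I} {q : I →ₗ[R] Q} (h : Exact ι q) (hι : Injective ι) (hq : Surjective q)
    (hY : ExtOneVanishes R Y M) (j : Y →ₗ[R] Q) : ∃ l : Y →ₗ[R] I, q ∘ₗ l = j := by
  -- the pullback `E` of `q` along `j` is an extension of `Y` by `M`; a splitting of it is a lift
  let E := LinearMap.ker (j.coprod (-q))
  have hmem : ∀ p : Y × I, p ∈ E ↔ j p.1 = q p.2 := fun p => by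
    simp [E, add_neg_eq_zero]
  let u : M →ₗ[R] E := (LinearMap.inr R Y I ∘ₗ ι).codRestrict E fun m => by
    simp [hmem, h.apply_apply_eq_zero]
  let π : E →ₗ[R] Y := LinearMap.fst R Y I ∘ₗ E.subtype
  have hu : Injective u := fun a b hab => hι congr(($hab : Y × I).2)
  have hπ : Surjective π := fun y =>
    let ⟨i, hi⟩ := hq (j y)
    ⟨⟨(y, i), (hmem _).2 hi.symm⟩, rfl⟩
  have hexact : Exact u π := by
    rintro ⟨⟨y, i⟩, hp⟩
    refine ⟨fun hy => ?_, ?_⟩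
    · obtain rfl : y = 0 := hy
      obtain ⟨m, rfl⟩ := (h i).mp (by simpa using ((hmem _).1 hp).symm)
      exact ⟨m, rfl⟩
    · rintro ⟨m, hm⟩
      exact congr(($hm.symm : Y × I).1)
  obtain ⟨s, hs⟩ := hY E u π hu hexact hπ
  refine ⟨LinearMap.snd R Y I ∘ₗ E.subtype ∘ₗ s, LinearMap.ext fun y => ?_⟩
  have hsy : (s y : Y × I).1 = y := LinearMap.congr_fun hs y
  simpa [hsy] using ((hmem _).1 (s y).2).symm

theorem Module.Baer.of_forall_exists_comp_eq {R : Type*} {I : Type v} {Q : Type*} [Ring R]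
    [AddCommGroup I] [AddCommGroup Q] [Module R I] [Module R Q] [Small.{v} R]
    [Module.Injective R I] (q : I →ₗ[R] Q)
    (hlift : ∀ (J : Ideal R) (j : J →ₗ[R] Q), ∃ l : J →ₗ[R] I, q ∘ₗ l = j) :
    Module.Baer R Q := by
  intro J j
  obtain ⟨l, rfl⟩ := hlift J j
  obtain ⟨l', hl'⟩ := Module.Baer.of_injective ‹Module.Injective R I› J l
  exact ⟨q ∘ₗ l', fun x hx => by simp [hl' x hx]⟩

theorem Module.injective_quotient_of_forall_extOneVanishes {R I : Type u} {M : Type*} [Ring R]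
    [AddCommGroup M] [AddCommGroup I] [Module R M] [Module R I] [Module.Injective R I]
    (ι : M →ₗ[R] I) (hι : Function.Injective ι) (hM : ∀ J : Ideal R, ExtOneVanishes R J M) :
    Module.Injective R (I ⧸ LinearMap.range ι) :=
  (Module.Baer.of_forall_exists_comp_eq (LinearMap.range ι).mkQ fun J j =>
    (LinearMap.exact_map_mkQ_range ι).exists_comp_eq_of_extOneVanishes hι
      (Submodule.mkQ_surjective _) (hM J) j).injective

theorem idLE1_of_forall_extOneVanishes (N : Modc A)
    (hN : ∀ J : Ideal Aᵐᵒᵖ, ExtOneVanishes Aᵐᵒᵖ J N) : IdLE1 N := by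
  let I : Modc A := CategoryTheory.Injective.under N
  let ι : N →ₗ[Aᵐᵒᵖ] I := (CategoryTheory.Injective.ι N).hom
  have hι : Function.Injective ι := (ModuleCat.mono_iff_injective _).1 inferInstance
  have hI : Module.Injective Aᵐᵒᵖ I := @Module.injective_module_of_injective_object _ _ _ _ _
    (CategoryTheory.Injective.injective_under N)
  exact ⟨I, ModuleCat.of Aᵐᵒᵖ (I ⧸ LinearMap.range ι), ι, (LinearMap.range ι).mkQ, hI,
    Module.injective_quotient_of_forall_extOneVanishes ι hι hN, hι, Submodule.mkQ_surjective _,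
    (Submodule.ker_mkQ _).symm⟩

theorem hom_tauinv_A_ne_zero_of_id_ge_two_general
    (A : Type u) [Ring A]
    (N F N' : Modc A) (hid : ¬ IdLE1 N)
    (f : N →ₗ[Aᵐᵒᵖ] F) (g : F →ₗ[Aᵐᵒᵖ] N')
    (hars : IsAlmostSplitSeq N F N' f g) :
    ∃ φ : N' →ₗ[Aᵐᵒᵖ] A, φ ≠ 0 := by
  by_contra! hHom
  refine hid (idLE1_of_forall_extOneVanishes N fun J =>
    hars.extOneVanishes_of_forall_eq_zero fun φ => ?_)
  let ι : J →ₗ[Aᵐᵒᵖ] A := (MulOpposite.opLinearEquiv Aᵐᵒᵖ).symm.toLinearMap ∘ₗ J.subtype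
  have hι : Function.Injective ι :=
    (MulOpposite.opLinearEquiv Aᵐᵒᵖ).symm.injective.comp J.injective_subtype
  exact LinearMap.ext fun x =>
    (map_eq_zero_iff ι hι).mp (LinearMap.congr_fun (hHom (ι ∘ₗ φ)) x)

/-- If `N` is indecomposable non-injective with `id_A N ≥ 2`,
then `Hom_A(τ_A⁻ N, A) ≠ 0`, where `τ_A⁻ N` is given by the almost split
sequence `0 → N → F → N' → 0`. -/
theorem hom_tauinv_A_ne_zero_of_id_ge_two
    (K : Type u) [CommRing K] [IsArtinianRing K]
    (A : Type u) [Ring A] [Algebra K A] [Module.Finite K A]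
    (N F N' : Modc A) (hN : FinGen N) (hNi : Indec N)
    (hni : ¬ Module.Injective Aᵐᵒᵖ N) (hid : ¬ IdLE1 N)
    (f : N →ₗ[Aᵐᵒᵖ] F) (g : F →ₗ[Aᵐᵒᵖ] N')
    (hars : IsAlmostSplitSeq N F N' f g) :
    ∃ φ : N' →ₗ[Aᵐᵒᵖ] A, φ ≠ 0 :=
  hom_tauinv_A_ne_zero_of_id_ge_two_general A N F N' hid f g hars
end

section
/- Let A be a self-injective artin algebra, C a component of Γ_A, I = ann_A(C), and B = A/I with residual identity e (a sum of the primitive idempotents of A not contained in I). Define A[I] = (eAe/eIe) ⊕ I with multiplication (b,x)·(c,y) = (bc, by + xc + xy) for b, c ∈ eAe/eIe and x, y ∈ I, using the algebra isomorphism eAe/eIe ≅ A/I to regard I as an (eAe/eIe)-bimodule, and assuming IeI = 0. Then A[I] is an associative K-algebra with identity (e + eIe, 1_A − e). -/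
universe u

section Corner

variable (A : Type u) [Ring A] (e : A) (I : Ideal A)

/-- The corner `eAe` of `A` at the idempotent `e`. -/
abbrev Ecorner : Type u := {a : A // e * a * e = a}

/-- The congruence on `eAe` identifying elements differing by `eIe`
(equivalently, by an element of `I`, for elements of `eAe`). -/
def cornerSetoid : Setoid (Ecorner A e) where
  r a b := (a : A) - (b : A) ∈ I
  iseqv := by
    constructor
    · intro a; simp
    · intro a b h
      have := I.neg_mem h; simpa using this
    · intro a b c h1 h2
      have := I.add_mem h1 h2; simpa using this

/-- The quotient algebra `eAe/eIe`. -/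
abbrev CornerQuot : Type u := Quotient (cornerSetoid A e I)

end Corner

section AIConstr

variable {A : Type u} [Ring A] {e : A} {I : Ideal A}

namespace AIhelper

lemma e_mul (he : IsIdempotentElem e) (a : Ecorner A e) : e * (a : A) = a := by
  conv_lhs => rw [← a.2]
  rw [← mul_assoc, ← mul_assoc, he, a.2]

lemma mul_e (he : IsIdempotentElem e) (a : Ecorner A e) : (a : A) * e = a := by
  conv_lhs => rw [← a.2]
  rw [mul_assoc, mul_assoc, he, ← mul_assoc, a.2]

lemma left_kill (hIeI : ∀ x ∈ I, ∀ y ∈ I, x * e * y = 0)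
    {a b : Ecorner A e} (h : (a : A) - b ∈ I) {y : A} (hy : y ∈ I) :
    (a : A) * y = (b : A) * y := by
  have hd : e * ((a : A) - b) * e = (a : A) - b := by
    rw [mul_sub, sub_mul, a.2, b.2]
  have h0 : ((a : A) - b) * e * y = 0 := hIeI _ h _ hy
  have hz : ((a : A) - b) * y = 0 := by
    calc ((a : A) - b) * y = (e * ((a : A) - b) * e) * y := by rw [hd]
      _ = e * (((a : A) - b) * e * y) := by simp only [mul_assoc]
      _ = 0 := by rw [h0, mul_zero]
  exact sub_eq_zero.mp (by rw [← sub_mul]; exact hz)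

lemma right_kill (hIeI : ∀ x ∈ I, ∀ y ∈ I, x * e * y = 0)
    {c d : Ecorner A e} (h : (c : A) - d ∈ I) {x : A} (hx : x ∈ I) :
    x * (c : A) = x * d := by
  have hd : e * ((c : A) - d) * e = (c : A) - d := by
    rw [mul_sub, sub_mul, c.2, d.2]
  have h0 : x * e * ((c : A) - d) = 0 := hIeI _ hx _ h
  have hz : x * ((c : A) - d) = 0 := by
    calc x * ((c : A) - d) = x * (e * ((c : A) - d) * e) := by rw [hd]
      _ = (x * e * ((c : A) - d)) * e := by simp only [mul_assoc]
      _ = 0 := by rw [h0, zero_mul]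
  exact sub_eq_zero.mp (by rw [← mul_sub]; exact hz)

def ecAdd (a b : Ecorner A e) : Ecorner A e :=
  ⟨(a : A) + b, by rw [mul_add, add_mul, a.2, b.2]⟩

def ecNeg (a : Ecorner A e) : Ecorner A e :=
  ⟨-(a : A), by rw [mul_neg, neg_mul, a.2]⟩

def ecZero : Ecorner A e := ⟨0, by simp⟩

def ecMul (he : IsIdempotentElem e) (a b : Ecorner A e) : Ecorner A e :=
  ⟨(a : A) * b, by
    simp only [← mul_assoc]
    rw [e_mul he, mul_assoc, mul_e he]⟩

def ecOne (he : IsIdempotentElem e) : Ecorner A e := ⟨e, by rw [he, he]⟩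

def pAdd (p q : CornerQuot A e I × ↥I) : CornerQuot A e I × ↥I :=
  (Quotient.liftOn₂ p.1 q.1
    (fun a b => Quotient.mk (cornerSetoid A e I) (ecAdd a b))
    (fun a b a' b' ha hb => Quotient.sound (show
      ((a : A) + (b : A)) - ((a' : A) + (b' : A)) ∈ I by
      have h := I.add_mem ha hb
      convert h using 1; noncomm_ring)),
   p.2 + q.2)

def pNeg (p : CornerQuot A e I × ↥I) : CornerQuot A e I × ↥I :=
  (Quotient.liftOn p.1 (fun a => Quotient.mk (cornerSetoid A e I) (ecNeg a))
    (fun a a' h => Quotient.sound (show (-(a : A)) - (-(a' : A)) ∈ I by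
      have h2 := I.neg_mem h
      convert h2 using 1; noncomm_ring)),
   -p.2)

def pZero : CornerQuot A e I × ↥I := (Quotient.mk (cornerSetoid A e I) ecZero, 0)

def pOne (he : IsIdempotentElem e) (h1e : (1 : A) - e ∈ I) :
    CornerQuot A e I × ↥I :=
  (Quotient.mk (cornerSetoid A e I) (ecOne he), ⟨1 - e, h1e⟩)

def pMul (he : IsIdempotentElem e)
    (hright : ∀ a : A, ∀ x ∈ I, x * a ∈ I)
    (hIeI : ∀ x ∈ I, ∀ y ∈ I, x * e * y = 0)
    (p q : CornerQuot A e I × ↥I) : CornerQuot A e I × ↥I :=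
  (Quotient.liftOn₂ p.1 q.1
    (fun a c => Quotient.mk (cornerSetoid A e I) (ecMul he a c))
    (fun a c a' c' ha hc => Quotient.sound (show
      (a : A) * (c : A) - (a' : A) * (c' : A) ∈ I by
      have h1 : ((a : A) - a') * c ∈ I := hright _ _ ha
      have h2 : (a' : A) * ((c : A) - c') ∈ I := I.mul_mem_left _ hc
      have h3 := I.add_mem h1 h2
      convert h3 using 1; noncomm_ring)),
   Quotient.liftOn₂ p.1 q.1
    (fun a c => (⟨(a : A) * q.2 + (p.2 : A) * c + (p.2 : A) * q.2,
      I.add_mem (I.add_mem (I.mul_mem_left _ q.2.2) (hright _ _ p.2.2))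
        (hright _ _ p.2.2)⟩ : ↥I))
    (fun a c a' c' ha hc => by
      have h1 : (a : A) * q.2 = (a' : A) * q.2 := left_kill hIeI ha q.2.2
      have h2 : (p.2 : A) * c = (p.2 : A) * c' := right_kill hIeI hc p.2.2
      simp [h1, h2]))

lemma pMul_mk (he : IsIdempotentElem e)
    (hright : ∀ a : A, ∀ x ∈ I, x * a ∈ I)
    (hIeI : ∀ x ∈ I, ∀ y ∈ I, x * e * y = 0)
    (a c : Ecorner A e) (x y : ↥I) :
    pMul he hright hIeI (Quotient.mk (cornerSetoid A e I) a, x)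
      (Quotient.mk (cornerSetoid A e I) c, y) =
      (Quotient.mk (cornerSetoid A e I) (ecMul he a c),
        ⟨(a : A) * y + (x : A) * c + (x : A) * y,
          I.add_mem (I.add_mem (I.mul_mem_left _ y.2) (hright _ _ x.2))
            (hright _ _ x.2)⟩) := rfl

@[simp] lemma ecAdd_coe (a b : Ecorner A e) : ((ecAdd a b : Ecorner A e) : A) = a + b := rfl
@[simp] lemma ecNeg_coe (a : Ecorner A e) : ((ecNeg a : Ecorner A e) : A) = -(a : A) := rfl
@[simp] lemma ecZero_coe : ((ecZero : Ecorner A e) : A) = 0 := rfl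
@[simp] lemma ecMul_coe (he : IsIdempotentElem e) (a b : Ecorner A e) :
    ((ecMul he a b : Ecorner A e) : A) = (a : A) * b := rfl
@[simp] lemma ecOne_coe (he : IsIdempotentElem e) :
    ((ecOne he : Ecorner A e) : A) = e := rfl
@[simp] lemma imk_coe (v : A) (h : v ∈ I) : ((⟨v, h⟩ : ↥I) : A) = v := rfl

@[simp] lemma pAdd_mk (a c : Ecorner A e) (x y : ↥I) :
    pAdd (Quotient.mk (cornerSetoid A e I) a, x)
      (Quotient.mk (cornerSetoid A e I) c, y) =
      (Quotient.mk (cornerSetoid A e I) (ecAdd a c), x + y) := rfl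

@[simp] lemma pNeg_mk (a : Ecorner A e) (x : ↥I) :
    pNeg (Quotient.mk (cornerSetoid A e I) a, x) =
      (Quotient.mk (cornerSetoid A e I) (ecNeg a), -x) := rfl

def pRing (he : IsIdempotentElem e)
    (hright : ∀ a : A, ∀ x ∈ I, x * a ∈ I)
    (hIeI : ∀ x ∈ I, ∀ y ∈ I, x * e * y = 0)
    (h1e : (1 : A) - e ∈ I) : Ring (CornerQuot A e I × ↥I) :=
  letI : Add (CornerQuot A e I × ↥I) := ⟨pAdd⟩
  letI : Mul (CornerQuot A e I × ↥I) := ⟨pMul he hright hIeI⟩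
  letI : Neg (CornerQuot A e I × ↥I) := ⟨pNeg⟩
  letI : Zero (CornerQuot A e I × ↥I) := ⟨pZero⟩
  letI : One (CornerQuot A e I × ↥I) := ⟨pOne he h1e⟩
  haveI hm : ∀ u v : CornerQuot A e I × ↥I, u * v = pMul he hright hIeI u v :=
    fun _ _ => rfl
  haveI ha : ∀ u v : CornerQuot A e I × ↥I, u + v = pAdd u v := fun _ _ => rfl
  haveI hn : ∀ u : CornerQuot A e I × ↥I, -u = pNeg u := fun _ => rfl
  haveI hz : (0 : CornerQuot A e I × ↥I) = pZero := rfl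
  haveI ho : (1 : CornerQuot A e I × ↥I) = pOne he h1e := rfl
  Ring.ofMinimalAxioms
    (by
      rintro ⟨p1, p2⟩ ⟨q1, q2⟩ ⟨r1, r2⟩
      induction p1 using Quotient.ind with | _ a => ?_
      induction q1 using Quotient.ind with | _ c => ?_
      induction r1 using Quotient.ind with | _ d => ?_
      simp only [ha, pAdd_mk]
      exact Prod.ext
        (congrArg (Quotient.mk (cornerSetoid A e I)) (Subtype.ext (by simp [add_assoc])))
        (add_assoc _ _ _))
    (by
      rintro ⟨p1, p2⟩
      induction p1 using Quotient.ind with | _ a => ?_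
      simp only [hz, pZero, ha, pAdd_mk]
      exact Prod.ext
        (congrArg (Quotient.mk (cornerSetoid A e I)) (Subtype.ext (by simp)))
        (zero_add _))
    (by
      rintro ⟨p1, p2⟩
      induction p1 using Quotient.ind with | _ a => ?_
      simp only [hz, pZero, ha, hn, pNeg_mk, pAdd_mk]
      exact Prod.ext
        (congrArg (Quotient.mk (cornerSetoid A e I)) (Subtype.ext (by simp)))
        (neg_add_cancel _))
    (by
      rintro ⟨p1, p2⟩ ⟨q1, q2⟩ ⟨r1, r2⟩
      induction p1 using Quotient.ind with | _ a => ?_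
      induction q1 using Quotient.ind with | _ c => ?_
      induction r1 using Quotient.ind with | _ d => ?_
      simp only [hm, pMul_mk]
      exact Prod.ext
        (congrArg (Quotient.mk (cornerSetoid A e I))
          (Subtype.ext (by simp [mul_assoc])))
        (Subtype.ext (by simp; noncomm_ring)))
    (by
      rintro ⟨p1, p2⟩
      induction p1 using Quotient.ind with | _ a => ?_
      simp only [ho, pOne, hm, pMul_mk]
      refine Prod.ext
        (congrArg (Quotient.mk (cornerSetoid A e I)) (Subtype.ext ?_))
        (Subtype.ext ?_)
      · simpa using e_mul he a
      · simp only [ecMul_coe, ecOne_coe, imk_coe, Submodule.coe_add]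
        rw [sub_mul, sub_mul, one_mul, one_mul, e_mul he a]
        abel)
    (by
      rintro ⟨p1, p2⟩
      induction p1 using Quotient.ind with | _ a => ?_
      simp only [ho, pOne, hm, pMul_mk]
      refine Prod.ext
        (congrArg (Quotient.mk (cornerSetoid A e I)) (Subtype.ext ?_))
        (Subtype.ext ?_)
      · simpa using mul_e he a
      · simp only [ecMul_coe, ecOne_coe, imk_coe, Submodule.coe_add]
        rw [mul_sub, mul_sub, mul_one, mul_one, mul_e he a]
        abel)
    (by
      rintro ⟨p1, p2⟩ ⟨q1, q2⟩ ⟨r1, r2⟩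
      induction p1 using Quotient.ind with | _ a => ?_
      induction q1 using Quotient.ind with | _ c => ?_
      induction r1 using Quotient.ind with | _ d => ?_
      simp only [hm, ha, pAdd_mk, pMul_mk]
      exact Prod.ext
        (congrArg (Quotient.mk (cornerSetoid A e I))
          (Subtype.ext (by simp; noncomm_ring)))
        (Subtype.ext (by simp; noncomm_ring)))
    (by
      rintro ⟨p1, p2⟩ ⟨q1, q2⟩ ⟨r1, r2⟩
      induction p1 using Quotient.ind with | _ a => ?_
      induction q1 using Quotient.ind with | _ c => ?_
      induction r1 using Quotient.ind with | _ d => ?_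
      simp only [hm, ha, pAdd_mk, pMul_mk]
      exact Prod.ext
        (congrArg (Quotient.mk (cornerSetoid A e I))
          (Subtype.ext (by simp; noncomm_ring)))
        (Subtype.ext (by simp; noncomm_ring)))

end AIhelper

end AIConstr

/-- Let `A` be a self-injective artin algebra, `I` a
two-sided ideal of `A` with residual identity `e` (an idempotent with
`1 - e ∈ I`) satisfying `IeI = 0`. Then
`A[I] = (eAe/eIe) ⊕ I`, with multiplication
`(b, x) · (c, y) = (bc, by + xc + xy)`, is an associative ring with identity
`(e + eIe, 1_A − e)`. -/
theorem algebra_AI_is_ring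
    (K : Type u) [CommRing K] [IsArtinianRing K]
    (A : Type u) [Ring A] [Algebra K A] [Module.Finite K A]
    (hself : Module.Injective Aᵐᵒᵖ A)
    (e : A) (he : IsIdempotentElem e)
    (I : Ideal A) (hright : ∀ a : A, ∀ x ∈ I, x * a ∈ I)
    (hIeI : ∀ x ∈ I, ∀ y ∈ I, x * e * y = 0)
    (h1e : (1 : A) - e ∈ I) :
    ∃ R : Ring (CornerQuot A e I × ↥I),
      (letI := R;
        (∀ (a c ac : Ecorner A e) (x y z : ↥I),
          (ac : A) = (a : A) * (c : A) →
          (z : A) = (a : A) * (y : A) + (x : A) * (c : A) + (x : A) * (y : A) →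
          ((Quotient.mk (cornerSetoid A e I) a, x) *
            (Quotient.mk (cornerSetoid A e I) c, y)
              : CornerQuot A e I × ↥I) =
            (Quotient.mk (cornerSetoid A e I) ac, z)) ∧
        (∀ (u : Ecorner A e) (w : ↥I), (u : A) = e → (w : A) = 1 - e →
          (1 : CornerQuot A e I × ↥I) =
            (Quotient.mk (cornerSetoid A e I) u, w))) := by
  classical
  letI R := AIhelper.pRing he hright hIeI h1e
  refine ⟨R, ?_, ?_⟩
  · intro a c ac x y z hac hz
    have hm : ∀ u v : CornerQuot A e I × ↥I,
        u * v = AIhelper.pMul he hright hIeI u v := fun _ _ => rfl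
    rw [hm, AIhelper.pMul_mk]
    exact Prod.ext
      (congrArg (Quotient.mk (cornerSetoid A e I)) (Subtype.ext hac.symm))
      (Subtype.ext hz.symm)
  · intro u w hu hw
    show AIhelper.pOne he h1e = _
    exact Prod.ext
      (congrArg (Quotient.mk (cornerSetoid A e I)) (Subtype.ext hu.symm))
      (Subtype.ext hw.symm)
end
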